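/- Let V be symmetric positive definite of size N+K, partitioned with benchmark block indices {1,…,K} and test block indices {K+1,…,N+K}, and let wᵟ = V⁻¹1/(1ᵀV⁻¹1). If the last N coordinates of wᵟ are zero, then the first K coordinates of wᵟ equal V₁₁⁻¹ 1_K / (1_Kᵀ V₁₁⁻¹ 1_K), i.e., the global minimum-variance portfolio of all assets coincides with the global minimum-variance portfolio of the benchmark assets alone, and 1ᵀ V⁻¹ 1 = 1_Kᵀ V₁₁⁻¹ 1_K. -/

import Mathlib

/-!
Write `w = V⁻¹ 1`. If its test-asset coordinates vanish, the benchmark rows of `V w = 1` read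
`V₁₁ w₁ = 1_K`, so `w₁ = V₁₁⁻¹ 1_K`, and `1ᵀ w = 1_Kᵀ w₁` because `w` is supported on the
benchmark block. Positive definiteness makes `V` and `V₁₁` invertible and `1ᵀ V⁻¹ 1` nonzero,
so the normalised portfolios agree as well.
-/

open Matrix

namespace Matrix

variable {m n R : Type*}

theorem PosDef.toBlocks₁₁ [Ring R] [PartialOrder R] [StarRing R] {A : Matrix (m ⊕ n) (m ⊕ n) R}
    (hA : A.PosDef) : A.toBlocks₁₁.PosDef :=
  hA.submatrix Sum.inl_injective

theorem PosDef.isUnit_det [Fintype m] [DecidableEq m] [Field R] [PartialOrder R] [StarRing R]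
    {A : Matrix m m R} (hA : A.PosDef) : IsUnit A.det :=
  (isUnit_iff_isUnit_det A).1 hA.isUnit

variable [Fintype m] [Fintype n]

theorem toBlocks₁₁_mulVec_of_comp_inr_eq_zero [NonUnitalNonAssocSemiring R]
    (A : Matrix (m ⊕ n) (m ⊕ n) R) {x : m ⊕ n → R} (hx : x ∘ Sum.inr = 0) :
    (A *ᵥ x) ∘ Sum.inl = A.toBlocks₁₁ *ᵥ (x ∘ Sum.inl) := by
  conv_lhs => rw [← A.fromBlocks_toBlocks, fromBlocks_mulVec, hx]
  simp

theorem dotProduct_eq_of_comp_inr_eq_zero [NonUnitalNonAssocSemiring R]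
    (u : m ⊕ n → R) {x : m ⊕ n → R} (hx : x ∘ Sum.inr = 0) :
    u ⬝ᵥ x = (u ∘ Sum.inl) ⬝ᵥ (x ∘ Sum.inl) := by
  have hx' (i : n) : x (Sum.inr i) = 0 := congrFun hx i
  simp [dotProduct, Fintype.sum_sum_type, hx']

theorem inv_mulVec_comp_inl_of_comp_inr_eq_zero [CommRing R] [DecidableEq m] [DecidableEq n]
    {A : Matrix (m ⊕ n) (m ⊕ n) R} (hA : IsUnit A.det) (hA₁₁ : IsUnit A.toBlocks₁₁.det)
    {b : m ⊕ n → R} (h : (A⁻¹ *ᵥ b) ∘ Sum.inr = 0) :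
    (A⁻¹ *ᵥ b) ∘ Sum.inl = A.toBlocks₁₁⁻¹ *ᵥ (b ∘ Sum.inl) := by
  have hsolve : A.toBlocks₁₁ *ᵥ ((A⁻¹ *ᵥ b) ∘ Sum.inl) = b ∘ Sum.inl := by
    rw [← toBlocks₁₁_mulVec_of_comp_inr_eq_zero _ h, mulVec_mulVec, mul_nonsing_inv _ hA,
      one_mulVec]
  rw [← hsolve, mulVec_mulVec, nonsing_inv_mul _ hA₁₁, one_mulVec]

end Matrix

/-- If the test-asset coordinates of the global minimum-variance portfolio vanish, then
its benchmark coordinates equal the benchmark-only global minimum-variance portfolio,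
and `1ᵀV⁻¹1 = 1_Kᵀ V₁₁⁻¹ 1_K`. -/
theorem stmt14 (N K : ℕ) (V : Matrix (Fin K ⊕ Fin N) (Fin K ⊕ Fin N) ℝ)
    (hV : V.PosDef) :
    let ones : Fin K ⊕ Fin N → ℝ := fun _ => 1
    let onesK : Fin K → ℝ := fun _ => 1
    let wδ : Fin K ⊕ Fin N → ℝ := (ones ⬝ᵥ (V⁻¹ *ᵥ ones))⁻¹ • (V⁻¹ *ᵥ ones)
    (∀ i : Fin N, wδ (Sum.inr i) = 0) →
      (∀ k : Fin K,
          wδ (Sum.inl k) =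
            ((onesK ⬝ᵥ ((V.toBlocks₁₁)⁻¹ *ᵥ onesK))⁻¹ •
              ((V.toBlocks₁₁)⁻¹ *ᵥ onesK)) k) ∧
        ones ⬝ᵥ (V⁻¹ *ᵥ ones) = onesK ⬝ᵥ ((V.toBlocks₁₁)⁻¹ *ᵥ onesK) := by
  intro ones onesK wδ h
  rcases isEmpty_or_nonempty (Fin K ⊕ Fin N) with hE | hNE
  · have : IsEmpty (Fin K) := (isEmpty_sum.1 hE).1
    simp [dotProduct]
  set w := V⁻¹ *ᵥ ones
  have hc : ones ⬝ᵥ w ≠ 0 := (hV.inv.dotProduct_mulVec_pos one_ne_zero).ne'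
  have hw₂ : w ∘ Sum.inr = 0 :=
    funext fun i => (mul_eq_zero.1 (h i)).resolve_left (inv_ne_zero hc)
  have hw₁ : w ∘ Sum.inl = V.toBlocks₁₁⁻¹ *ᵥ onesK :=
    inv_mulVec_comp_inl_of_comp_inr_eq_zero hV.isUnit_det hV.toBlocks₁₁.isUnit_det hw₂
  have hsum : ones ⬝ᵥ w = onesK ⬝ᵥ (V.toBlocks₁₁⁻¹ *ᵥ onesK) := by
    rw [dotProduct_eq_of_comp_inr_eq_zero _ hw₂, hw₁]
    rfl
  refine ⟨fun k => ?_, hsum⟩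
  change (ones ⬝ᵥ w)⁻¹ * w (Sum.inl k) = _
  rw [hsum, Pi.smul_apply, smul_eq_mul, ← congrFun hw₁ k]
  rfl
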